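/- arXiv:2602.14718 — 3 statements merged into one kernel-verified Lean document; each statement's English description precedes it below -/
import Mathlib

section
/- If G is a subgroup of GL₂(F_p) whose order is divisible by p and which does not contain SL₂(F_p), then G stabilizes a line in F_p², i.e. G is contained in a Borel subgroup (a conjugate of the upper triangular matrices). -/
/-!
An element `u ∈ G` of order `p` satisfies `(u - 1)² = 0` and `u ≠ 1`, so it fixes exactly
one line `L`. If some `g ∈ G` moves `L`, take `e ∈ L` nonzero: in the basis `(e, g e)` the
element `u` is upper unitriangular and `g u g⁻¹` is lower unitriangular, both with nonzero
off-diagonal entry. Over `𝔽_p` their powers are all the elementary transvections, which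
generate `SL₂(𝔽_p)`.
-/

open Matrix Module LinearMap Submodule

namespace Matrix

variable {K : Type*} [Field K] {n : Type*} [Fintype n] [DecidableEq n]

theorem pow_card_eq_zero_of_isNilpotent {N : Matrix n n K} (hN : IsNilpotent N) :
    N ^ Fintype.card n = 0 := by
  have hchar : N.charpoly = Polynomial.X ^ Fintype.card n :=
    sub_eq_zero.mp (isNilpotent_charpoly_sub_pow_of_isNilpotent hN).eq_zero
  simpa [hchar] using aeval_self_charpoly N

theorem isNilpotent_sub_one_of_pow_eq_one {R : Type*} [Ring R] (p : ℕ) [Fact p.Prime]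
    [CharP R p] {u : Matrix n n R} (hu : u ^ p = 1) : IsNilpotent (u - 1) := by
  cases isEmpty_or_nonempty n
  · exact ⟨1, Subsingleton.elim _ _⟩
  · exact ⟨p, by rw [sub_pow_char_of_commute (p := p) (Commute.one_right u), hu, one_pow,
      sub_self]⟩

theorem finrank_ker_mulVecLin_eq_one {N : Matrix (Fin 2) (Fin 2) K} (hN0 : N ≠ 0)
    (hN : N ^ 2 = 0) : finrank K (ker N.mulVecLin) = 1 := by
  have hrange : range N.mulVecLin ≤ ker N.mulVecLin := by
    rintro _ ⟨x, rfl⟩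
    rw [mem_ker, mulVecLin_apply, mulVecLin_apply, mulVec_mulVec, ← sq, hN, zero_mulVec]
  have hpos : 0 < finrank K (range N.mulVecLin) := by
    refine Nat.pos_of_ne_zero fun h => hN0 (Matrix.toLin'.injective ?_)
    simpa [toLin'_apply'] using range_eq_bot.mp (Submodule.finrank_eq_zero.mp h)
  have hsum := finrank_range_add_finrank_ker N.mulVecLin
  rw [finrank_fin_fun] at hsum
  have := Submodule.finrank_mono hrange
  omega

theorem exists_mulVec_eq_add_smul {u : Matrix n n K} (hu : (u - 1) ^ 2 = 0) {e : n → K}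
    (hker : ker (u - 1).mulVecLin ≤ K ∙ e) {x : n → K} (hx : x ∉ K ∙ e) :
    ∃ a : K, a ≠ 0 ∧ u *ᵥ x = x + a • e := by
  have hNx : (u - 1) *ᵥ x ∈ K ∙ e := hker <| by
    rw [mem_ker, mulVecLin_apply, mulVec_mulVec, ← sq, hu, zero_mulVec]
  obtain ⟨a, ha⟩ := mem_span_singleton.mp hNx
  refine ⟨a, ?_, ?_⟩
  · rintro rfl
    exact hx (hker (by rw [mem_ker, mulVecLin_apply, ← ha, zero_smul]))
  · rw [ha, sub_mulVec, one_mulVec, add_sub_cancel]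

theorem SpecialLinearGroup.transvection_nsmul {R : Type*} [CommRing R] {i j : n} (hij : i ≠ j)
    (c : R) (k : ℕ) :
    SpecialLinearGroup.transvection hij (k • c) = SpecialLinearGroup.transvection hij c ^ k := by
  induction k with
  | zero => simp
  | succ k ih => rw [succ_nsmul, SpecialLinearGroup.transvection_add, ih, pow_succ]

end Matrix

theorem exists_linearIndependent_pair_of_map_ne {K V : Type*} [Field K] [AddCommGroup V]
    [Module K V] {L : Submodule K V} (hL : finrank K L = 1) {f : V →ₗ[K] V}
    (hf : Function.Injective f) (hmap : L.map f ≠ L) :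
    ∃ e : V, L = K ∙ e ∧ LinearIndependent K ![e, f e] := by
  obtain ⟨e, heL, he⟩ := exists_mem_ne_zero_of_ne_bot (p := L) fun h => by
    rw [h, finrank_bot] at hL
    exact zero_ne_one hL
  have hLe : L = K ∙ e := eq_span_singleton_of_mem_of_finrank_eq_one hL heL he
  refine ⟨e, hLe, ?_⟩
  rw [hLe, Submodule.map_span, Set.image_singleton] at hmap
  have hfe : f e ≠ 0 := (map_ne_zero_iff f hf).mpr he
  refine linearIndependent_fin2.mpr ⟨hfe, fun a ha => hmap ?_⟩
  refine (eq_of_le_of_finrank_le ?_ ?_).symm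
  · rw [span_singleton_le_iff_mem, mem_span_singleton]
    exact ⟨a, ha⟩
  · rw [finrank_span_singleton he, finrank_span_singleton hfe]

theorem LinearMap.toMatrix_eq_transvection {K V : Type*} [Field K] [AddCommGroup V] [Module K V]
    {n : Type*} [Fintype n] [DecidableEq n] (b : Basis n K V) {f : V →ₗ[K] V} {i j : n}
    (hij : i ≠ j) {c : K} (hfix : ∀ k ≠ j, f (b k) = b k) (hj : f (b j) = b j + c • b i) :
    LinearMap.toMatrix b b f = Matrix.transvection i j c := by
  rw [← LinearMap.toMatrix_toLin b b (Matrix.transvection i j c)]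
  congr 1
  refine b.ext fun k => ?_
  rw [Matrix.toLin_self]
  simp only [Matrix.transvection, Matrix.add_apply, add_smul, Finset.sum_add_distrib,
    Matrix.one_apply, Matrix.single_apply, ite_smul, one_smul, zero_smul, Finset.sum_ite_eq',
    Finset.mem_univ, if_true]
  by_cases hk : k = j
  · subst hk
    simp [hj]
  · simp [hfix k hk, Ne.symm hk]

namespace Matrix.GeneralLinearGroup

variable {K : Type*} [Field K] {n : Type*} [Fintype n] [DecidableEq n]

/-- `g` written in the basis `b`, i.e. `P⁻¹ g P` where the columns of `P` are the `b i`. -/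
noncomputable def changeBasis (b : Basis n K (n → K)) : GL n K ≃* GL n K :=
  Units.mapEquiv (Matrix.toLinAlgEquiv'.trans (LinearMap.toMatrixAlgEquiv b)).toMulEquiv

theorem coe_changeBasis (b : Basis n K (n → K)) (g : GL n K) :
    (changeBasis b g : Matrix n n K) = LinearMap.toMatrix b b (Matrix.toLin' g) := rfl

theorem det_changeBasis (b : Basis n K (n → K)) (g : GL n K) :
    (changeBasis b g : Matrix n n K).det = (g : Matrix n n K).det := by
  rw [coe_changeBasis, LinearMap.det_toMatrix, LinearMap.det_toLin']

theorem changeBasis_eq_transvection (b : Basis n K (n → K)) {g : GL n K} {i j : n}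
    (hij : i ≠ j) {c : K} (hfix : ∀ k ≠ j, (g : Matrix n n K) *ᵥ b k = b k)
    (hj : (g : Matrix n n K) *ᵥ b j = b j + c • b i) :
    changeBasis b g = SpecialLinearGroup.toGL (SpecialLinearGroup.transvection hij c) :=
  Units.ext (LinearMap.toMatrix_eq_transvection b hij hfix hj)

theorem conj_mulVec (g u : GL n K) (x : n → K) :
    ((g * u * g⁻¹ : GL n K) : Matrix n n K) *ᵥ ((g : Matrix n n K) *ᵥ x) =
      (g : Matrix n n K) *ᵥ ((u : Matrix n n K) *ᵥ x) := by
  simp only [Units.val_mul, mulVec_mulVec, mul_assoc, Units.inv_mul, mul_one]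

theorem mem_of_det_eq_one_of_transvection_mem {H : Subgroup (GL (Fin 2) K)}
    (hupper : ∀ c : K,
      SpecialLinearGroup.toGL (SpecialLinearGroup.transvection (zero_ne_one' (Fin 2)) c) ∈ H)
    (hlower : ∀ c : K,
      SpecialLinearGroup.toGL (SpecialLinearGroup.transvection (one_ne_zero' (Fin 2)) c) ∈ H)
    {M : GL (Fin 2) K} (hM : (M : Matrix (Fin 2) (Fin 2) K).det = 1) : M ∈ H := by
  have hSL : ∀ A, SpecialLinearGroup.toGL A ∈ H :=
    SL2.transvection_induction _
      (fun i j hij c => by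
        fin_cases i <;> fin_cases j
        exacts [absurd rfl hij, hupper c, hlower c, absurd rfl hij])
      (fun A B hA hB => by simpa using mul_mem hA hB)
  simpa [show SpecialLinearGroup.toGL ⟨M, hM⟩ = M from Units.ext rfl] using hSL ⟨M, hM⟩

theorem transvection_mem_of_ne_zero {p : ℕ} [Fact p.Prime] {H : Subgroup (GL n (ZMod p))}
    {i j : n} (hij : i ≠ j) {a : ZMod p} (ha : a ≠ 0)
    (hH : SpecialLinearGroup.toGL (SpecialLinearGroup.transvection hij a) ∈ H) (c : ZMod p) :
    SpecialLinearGroup.toGL (SpecialLinearGroup.transvection hij c) ∈ H := by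
  have hc : c = (c / a).val • a := by
    rw [nsmul_eq_mul, ZMod.natCast_val, ZMod.cast_id, div_mul_cancel₀ c ha]
  rw [hc, SpecialLinearGroup.transvection_nsmul, map_pow]
  exact pow_mem hH _

theorem exists_changeBasis_eq_transvections {u g : GL (Fin 2) K}
    (hu : ((u : Matrix (Fin 2) (Fin 2) K) - 1) ^ 2 = 0)
    (hL : finrank K (ker ((u : Matrix (Fin 2) (Fin 2) K) - 1).mulVecLin) = 1)
    (hg : (ker ((u : Matrix (Fin 2) (Fin 2) K) - 1).mulVecLin).map
      (g : Matrix (Fin 2) (Fin 2) K).mulVecLin ≠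
        ker ((u : Matrix (Fin 2) (Fin 2) K) - 1).mulVecLin) :
    ∃ (b : Basis (Fin 2) K (Fin 2 → K)) (a c : K), a ≠ 0 ∧ c ≠ 0 ∧
      changeBasis b u =
        SpecialLinearGroup.toGL (SpecialLinearGroup.transvection (zero_ne_one' (Fin 2)) a) ∧
      changeBasis b (g * u * g⁻¹) =
        SpecialLinearGroup.toGL (SpecialLinearGroup.transvection (one_ne_zero' (Fin 2)) c) := by
  set gM : Matrix (Fin 2) (Fin 2) K := (g : Matrix (Fin 2) (Fin 2) K)
  obtain ⟨e, hLe, hli⟩ := exists_linearIndependent_pair_of_map_ne hL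
    (f := gM.mulVecLin) (mulVec_injective_of_isUnit g.isUnit) hg
  have hue : (u : Matrix (Fin 2) (Fin 2) K) *ᵥ e = e := by
    have heL := hLe ▸ mem_span_singleton_self e
    rwa [mem_ker, mulVecLin_apply, sub_mulVec, one_mulVec, sub_eq_zero] at heL
  have he_notMem : e ∉ K ∙ (gM *ᵥ e) := by
    simpa [mem_span_singleton] using (linearIndependent_fin2.mp hli).2
  have hge_notMem : gM *ᵥ e ∉ K ∙ e := by
    simpa [mem_span_singleton] using
      (linearIndependent_fin2.mp (LinearIndependent.pair_symm_iff.mp hli)).2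
  obtain ⟨a, ha, hua⟩ := exists_mulVec_eq_add_smul hu hLe.le hge_notMem
  -- `g u g⁻¹` sends `e = g w` to `g (u w)`, so its action on `e` is read off from `u w`.
  set w := ((g⁻¹ : GL (Fin 2) K) : Matrix (Fin 2) (Fin 2) K) *ᵥ e
  have hgw : gM *ᵥ w = e := by rw [mulVec_mulVec, Units.mul_inv, one_mulVec]
  have hw_notMem : w ∉ K ∙ e := fun hw => he_notMem <| by
    obtain ⟨t, ht⟩ := mem_span_singleton.mp hw
    exact mem_span_singleton.mpr ⟨t, by rw [← mulVec_smul, ht, hgw]⟩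
  obtain ⟨c, hc, huc⟩ := exists_mulVec_eq_add_smul hu hLe.le hw_notMem
  let b := basisOfLinearIndependentOfCardEqFinrank hli (by simp)
  have hb : ⇑b = ![e, gM *ᵥ e] := coe_basisOfLinearIndependentOfCardEqFinrank hli _
  refine ⟨b, a, c, ha, hc, changeBasis_eq_transvection b _ ?_ ?_,
    changeBasis_eq_transvection b _ ?_ ?_⟩
  · intro k hk
    fin_cases k
    exacts [by simpa [hb] using hue, absurd rfl hk]
  · simpa [hb] using hua
  · intro k hk
    fin_cases k
    exacts [absurd rfl hk, by simpa [hb, hue] using conj_mulVec g u e]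
  · have hconj := conj_mulVec g u w
    rw [hgw, huc, mulVec_add, mulVec_smul, hgw] at hconj
    simpa [hb] using hconj

theorem mem_of_det_eq_one_of_map_ker_ne {p : ℕ} [Fact p.Prime]
    {G : Subgroup (GL (Fin 2) (ZMod p))} {u g : GL (Fin 2) (ZMod p)} (huG : u ∈ G) (hgG : g ∈ G)
    (hu : ((u : Matrix (Fin 2) (Fin 2) (ZMod p)) - 1) ^ 2 = 0)
    (hL : finrank (ZMod p) (ker ((u : Matrix (Fin 2) (Fin 2) (ZMod p)) - 1).mulVecLin) = 1)
    (hg : (ker ((u : Matrix (Fin 2) (Fin 2) (ZMod p)) - 1).mulVecLin).map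
      (g : Matrix (Fin 2) (Fin 2) (ZMod p)).mulVecLin ≠
        ker ((u : Matrix (Fin 2) (Fin 2) (ZMod p)) - 1).mulVecLin)
    {M : GL (Fin 2) (ZMod p)} (hM : (M : Matrix (Fin 2) (Fin 2) (ZMod p)).det = 1) : M ∈ G := by
  obtain ⟨b, a, c, ha, hc, hbu, hbv⟩ := exists_changeBasis_eq_transvections hu hL hg
  set H := G.map (changeBasis b).toMonoidHom
  have hH : ∀ x ∈ G, changeBasis b x ∈ H := fun x hx => Subgroup.mem_map_of_mem _ hx
  have hvG : g * u * g⁻¹ ∈ G := G.mul_mem (G.mul_mem hgG huG) (G.inv_mem hgG)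
  have hMH : changeBasis b M ∈ H :=
    mem_of_det_eq_one_of_transvection_mem
      (transvection_mem_of_ne_zero _ ha (hbu ▸ hH u huG))
      (transvection_mem_of_ne_zero _ hc (hbv ▸ hH _ hvG))
      ((det_changeBasis b M).trans hM)
  simpa [H] using hMH

end Matrix.GeneralLinearGroup

/-- If G ≤ GL₂(F_p) has order divisible by p and does not contain SL₂(F_p),
then G stabilizes a line in F_p², i.e. G is contained in a Borel subgroup. -/
theorem subgroup_order_div_p_stabilizes_line (p : ℕ) [Fact p.Prime]
    (G : Subgroup (GL (Fin 2) (ZMod p)))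
    (hdvd : p ∣ Nat.card G)
    (hSL : ¬ ∀ M : GL (Fin 2) (ZMod p),
      (M : Matrix (Fin 2) (Fin 2) (ZMod p)).det = 1 → M ∈ G) :
    ∃ L : Submodule (ZMod p) (Fin 2 → ZMod p),
      Module.finrank (ZMod p) L = 1 ∧
      ∀ g ∈ G, L.map (Matrix.mulVecLin (g : Matrix (Fin 2) (Fin 2) (ZMod p))) = L := by
  obtain ⟨⟨u, huG⟩, hord⟩ := exists_prime_orderOf_dvd_card' p hdvd
  rw [Subgroup.orderOf_mk] at hord
  have hu1 : (u : Matrix (Fin 2) (Fin 2) (ZMod p)) - 1 ≠ 0 := fun h => by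
    rw [sub_eq_zero, ← Units.val_one, Units.val_inj] at h
    rw [h, orderOf_one] at hord
    exact (Fact.out : p.Prime).one_lt.ne hord
  have hup : u ^ p = 1 := orderOf_dvd_iff_pow_eq_one.mp hord.dvd
  have hu2 : ((u : Matrix (Fin 2) (Fin 2) (ZMod p)) - 1) ^ 2 = 0 :=
    pow_card_eq_zero_of_isNilpotent <| isNilpotent_sub_one_of_pow_eq_one p <| by
      rw [← Units.val_pow_eq_pow_val, hup, Units.val_one]
  have hL := finrank_ker_mulVecLin_eq_one hu1 hu2
  refine ⟨_, hL, fun g hg => ?_⟩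
  by_contra hne
  exact hSL fun M hM => GeneralLinearGroup.mem_of_det_eq_one_of_map_ker_ne huG hg hu2 hL hne hM
end

section
/- The elliptic curve y² = x³ − 27 has no rational points with x ∉ {3, 0, −6}; equivalently, its Mordell–Weil group over Q is finite and every affine rational point has x-coordinate 3, 0, or −6 (with y = 0, y² = −27 impossible, and y² = −243 impossible respectively), so the only affine rational point is (3, 0). -/
/-!
The substitution `u = (9 + y) / (3x)`, `v = (9 - y) / (3x)` sends a rational point of
`y² = x³ - 27` to a rational point of `u³ + v³ = 2`, and `u = v` forces `y = 0`. Clearing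
denominators gives coprime integers with `a³ + b³ = 2c³`, `c ≠ 0`, and `a = P + Q`, `b = P - Q`
turns this into `P (P² + 3Q²) = c³`. This is Euler's descent: since `ℤ[ω]` is a principal ideal
domain whose units are `±ωᵏ`, a coprime solution of `p² + 3q² = t³` with `p + q` odd has
`p + q√-3 = (m + n√-3)³`. Applied to `P² + 3Q²` (or to `Q² + 3(P/3)²` when `3 ∣ P`), this
writes a coprime factor of `c³` as `x (x - y) (x + y)` with pairwise coprime factors, hence
three cubes `γ³, α³, β³` with `α³ + β³ = 2γ³` and `0 < |γ| < |c|`, unless `Q = 0`.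
-/

open NumberField IsCyclotomicExtension.Rat.Three

section EisensteinIntegers

variable {K : Type*} [Field K] {ζ : K} (hζ : IsPrimitiveRoot ζ 3)

local notation "ω" => hζ.toInteger

lemma toInteger_sq_add_add_one : ω ^ 2 + ω + 1 = 0 := eta_sq_add_eta_add_one hζ

lemma int_add_int_mul_toInteger_inj [CharZero K] {m n m' n' : ℤ}
    (h : (m : 𝓞 K) + n * ω = m' + n' * ω) : m = m' ∧ n = n' := by
  set d := m - m'
  set e := n - n'
  have h0 : (d : 𝓞 K) + e * ω = 0 := by simp only [d, e]; push_cast; linear_combination h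
  -- `(2d - e)² + 3e² = 4 N(d + eω)`
  have hnorm : (((2 * d - e) ^ 2 + 3 * e ^ 2 : ℤ) : 𝓞 K) = 0 := by
    push_cast
    linear_combination 4 * (d + e * ω ^ 2) * h0 +
      (-4 * d * e + 4 * e ^ 2 * (1 - ω)) * toInteger_sq_add_add_one hζ
  have hnorm' : (2 * d - e) ^ 2 + 3 * e ^ 2 = 0 := by exact_mod_cast hnorm
  have he : e = 0 := by nlinarith [sq_nonneg (2 * d - e), sq_nonneg e]
  have hd : d = 0 := by nlinarith [sq_nonneg (2 * d - e), sq_nonneg e]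
  omega

variable [NumberField K] [IsCyclotomicExtension {3} ℚ K]

lemma exists_int_add_int_mul_toInteger (x : 𝓞 K) : ∃ m n : ℤ, x = m + n * ω := by
  have hx : x ∈ Algebra.adjoin ℤ {ω} := by
    rw [← hζ.integralPowerBasis_gen, hζ.integralPowerBasis.adjoin_gen_eq_top]
    trivial
  induction hx using Algebra.adjoin_induction with
  | mem y hy => exact ⟨0, 1, by rw [Set.mem_singleton_iff.mp hy]; push_cast; ring⟩
  | algebraMap r => exact ⟨r, 0, by simp⟩
  | add y z _ _ hy hz =>
    obtain ⟨m, n, rfl⟩ := hy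
    obtain ⟨m', n', rfl⟩ := hz
    exact ⟨m + m', n + n', by push_cast; ring⟩
  | mul y z _ _ hy hz =>
    obtain ⟨m, n, rfl⟩ := hy
    obtain ⟨m', n', rfl⟩ := hz
    refine ⟨m * m' - n * n', m * n' + n * m' - n * n', ?_⟩
    push_cast
    linear_combination (n * n' : 𝓞 K) * toInteger_sq_add_add_one hζ

lemma exists_cube_eq_int_add_two_mul_toInteger (x : 𝓞 K) :
    ∃ A B : ℤ, x ^ 3 = A + 2 * B * ω := by
  obtain ⟨m, n, rfl⟩ := exists_int_add_int_mul_toInteger hζ x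
  obtain ⟨k, hk⟩ : Even (m * n * (m - n)) := by
    simp only [Int.even_mul, Int.even_sub]
    tauto
  have hk' : ((m * n * (m - n) : ℤ) : 𝓞 K) = ((k + k : ℤ) : 𝓞 K) := by rw [hk]
  push_cast at hk'
  refine ⟨m ^ 3 + n ^ 3 - 3 * m * n ^ 2, 3 * k, ?_⟩
  push_cast
  linear_combination 3 * (m * n ^ 2 : 𝓞 K) * toInteger_sq_add_add_one hζ +
    (n ^ 3 : 𝓞 K) * hζ.toInteger_cube_eq_one + 3 * ω * hk'

lemma exists_cube_eq_cube_int_add_two_mul_toInteger (x : 𝓞 K) :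
    ∃ m k : ℤ, x ^ 3 = (m + 2 * k * ω) ^ 3 := by
  -- `x`, `ω x` and `ω² x` have the same cube, and one of them has an even `ω`-coordinate.
  obtain ⟨m, n, rfl⟩ := exists_int_add_int_mul_toInteger hζ x
  have hω3 := hζ.toInteger_cube_eq_one
  have hω := toInteger_sq_add_add_one hζ
  rcases Int.even_or_odd n with ⟨k, rfl⟩ | hn
  · exact ⟨m, k, by push_cast; ring⟩
  rcases Int.even_or_odd m with ⟨k, rfl⟩ | hm
  · refine ⟨n - (k + k), -k, ?_⟩
    calc ((↑(k + k) : 𝓞 K) + n * ω) ^ 3 = (ω ^ 2 * ((↑(k + k) : 𝓞 K) + n * ω)) ^ 3 := by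
          rw [mul_pow, show (ω ^ 2) ^ 3 = 1 by linear_combination (ω ^ 3 + 1) * hω3, one_mul]
      _ = _ := by push_cast; congr 1; linear_combination (k + k : 𝓞 K) * hω + n * hω3
  · obtain ⟨k, hk⟩ := hm.sub_odd hn
    have hk' : ((m - n : ℤ) : 𝓞 K) = ((k + k : ℤ) : 𝓞 K) := by rw [hk]
    push_cast at hk'
    refine ⟨-n, k, ?_⟩
    calc ((m : 𝓞 K) + n * ω) ^ 3 = (ω * ((m : 𝓞 K) + n * ω)) ^ 3 := by
          rw [mul_pow, hω3, one_mul]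
      _ = _ := by push_cast; congr 1; linear_combination (n : 𝓞 K) * hω + ω * hk'

lemma exists_eq_cube_of_eq_unit_mul_cube {a b : ℤ} (ha : Odd a) {u : (𝓞 K)ˣ} {δ : 𝓞 K}
    (h : (a : 𝓞 K) + 2 * b * ω = u * δ ^ 3) : ∃ δ' : 𝓞 K, (a : 𝓞 K) + 2 * b * ω = δ' ^ 3 := by
  -- Cubes are integers mod 2 and the left side is 1 mod 2, which excludes `u = ±ω, ±ω²`.
  obtain ⟨A, B, hAB⟩ := exists_cube_eq_int_add_two_mul_toInteger hζ δ
  have hω := toInteger_sq_add_add_one hζ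
  have hcoord {m n : ℤ} (h' : (a : 𝓞 K) + 2 * b * ω = m + n * ω) : a = m ∧ 2 * b = n :=
    int_add_int_mul_toInteger_inj hζ (by push_cast; exact h')
  obtain ⟨k, rfl⟩ := ha
  have hmem := Units.mem hζ u
  simp only [List.mem_cons, List.not_mem_nil, or_false] at hmem
  rcases hmem with rfl | rfl | rfl | rfl | rfl | rfl
  · exact ⟨δ, by rw [h, Units.val_one, one_mul]⟩
  · exact ⟨-δ, by rw [h, Units.val_neg, Units.val_one]; ring⟩
  · have := hcoord (m := -2 * B) (n := A - 2 * B) (by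
      rw [h, hAB, coe_eta]; push_cast; linear_combination (2 * B : 𝓞 K) * hω)
    omega
  · have := hcoord (m := 2 * B) (n := 2 * B - A) (by
      rw [h, hAB, Units.val_neg, coe_eta]; push_cast; linear_combination (-2 * B : 𝓞 K) * hω)
    omega
  · have := hcoord (m := 2 * B - A) (n := -A) (by
      rw [h, hAB, Units.val_pow_eq_pow_val, coe_eta]; push_cast
      linear_combination (A + 2 * B * (ω - 1) : 𝓞 K) * hω)
    omega
  · have := hcoord (m := A - 2 * B) (n := A) (by
      rw [h, hAB, Units.val_neg, Units.val_pow_eq_pow_val, coe_eta]; push_cast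
      linear_combination (-A - 2 * B * (ω - 1) : 𝓞 K) * hω)
    omega

lemma isCoprime_six_of_sq_add_three_mul_sq_eq_cube {p q t : ℤ} (hpq : IsCoprime p q)
    (hodd : Odd (p + q)) (h : p ^ 2 + 3 * q ^ 2 = t ^ 3) : IsCoprime 6 t := by
  have h2 : IsCoprime 2 t := by
    rw [Int.isCoprime_two_left]
    have : Odd (t ^ 3) := by
      rw [← h]
      have h3_odd : ¬ Even (3 : ℤ) := by decide
      simp only [← Int.not_even_iff_odd, Int.even_add, Int.even_mul, Int.even_pow] at hodd ⊢
      tauto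
    exact (Int.odd_pow' three_ne_zero).mp this
  have h3 : IsCoprime 3 t := by
    rw [Int.prime_three.coprime_iff_not_dvd]
    rintro ⟨w, rfl⟩
    obtain ⟨r, rfl⟩ : (3 : ℤ) ∣ p :=
      Int.prime_three.dvd_of_dvd_pow (n := 2) ⟨9 * w ^ 3 - q ^ 2, by linarith⟩
    have h3q : (3 : ℤ) ∣ q :=
      Int.prime_three.dvd_of_dvd_pow (n := 2) ⟨3 * w ^ 3 - r ^ 2, by linarith⟩
    exact Int.prime_three.not_isUnit (hpq.isUnit_of_dvd' (dvd_mul_right 3 r) h3q)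
  simpa using h3.mul_left h2

lemma exists_cube_eq_of_sq_add_three_mul_sq_eq_cube {p q t : ℤ} (hpq : IsCoprime p q)
    (hodd : Odd (p + q)) (h : p ^ 2 + 3 * q ^ 2 = t ^ 3) :
    ∃ m k : ℤ, ((p + q : ℤ) : 𝓞 K) + 2 * q * ω = (m + 2 * k * ω) ^ 3 := by
  have := IsCyclotomicExtension.Rat.three_pid K
  set s : 𝓞 K := 2 * ω + 1 with hs_def
  have hs : s ^ 2 = -3 := by linear_combination 4 * toInteger_sq_add_add_one hζ
  have hmul : ((p : 𝓞 K) + q * s) * (p - q * s) = (t : 𝓞 K) ^ 3 := by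
    have : ((p : 𝓞 K)) ^ 2 + 3 * (q : 𝓞 K) ^ 2 = (t : 𝓞 K) ^ 3 := by exact_mod_cast h
    linear_combination this - (q : 𝓞 K) ^ 2 * hs
  have hcop : IsCoprime ((p : 𝓞 K) + q * s) (p - q * s) := by
    obtain ⟨a, b, hab⟩ := (hpq.map (Int.castRingHom (𝓞 K)))
    obtain ⟨c, d, hcd⟩ :=
      ((isCoprime_six_of_sq_add_three_mul_sq_eq_cube hpq hodd h).pow_right (n := 3)).map
        (Int.castRingHom (𝓞 K))
    simp only [eq_intCast, Int.cast_pow, Int.cast_ofNat] at hab hcd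
    -- A common divisor of `p ± q s` divides `6` and `t³`.
    have hsix : (6 : 𝓞 K) = (3 * a - b * s) * (p + q * s) + (3 * a + b * s) * (p - q * s) := by
      linear_combination -6 * hab + 2 * b * q * hs
    refine ⟨c * (3 * a - b * s) + d * (p - q * s), c * (3 * a + b * s), ?_⟩
    linear_combination hcd - c * hsix + d * hmul
  obtain ⟨δ, u, hu⟩ := exists_associated_pow_of_mul_eq_pow' hcop hmul
  obtain ⟨δ', hδ'⟩ := exists_eq_cube_of_eq_unit_mul_cube hζ (b := q) hodd (u := u) (δ := δ) (by
    rw [mul_comm (u : 𝓞 K), hu, hs_def]; push_cast; ring)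
  obtain ⟨m, k, hmk⟩ := exists_cube_eq_cube_int_add_two_mul_toInteger hζ δ'
  exact ⟨m, k, hδ'.trans hmk⟩

end EisensteinIntegers

-- Euler: `p + q√-3 = (m + n√-3)³`.
theorem exists_eq_of_sq_add_three_mul_sq_eq_cube {p q t : ℤ} (hpq : IsCoprime p q)
    (hodd : Odd (p + q)) (h : p ^ 2 + 3 * q ^ 2 = t ^ 3) :
    ∃ m n : ℤ, IsCoprime m n ∧ Odd (m + n) ∧
      p = m * (m ^ 2 - 9 * n ^ 2) ∧ q = 3 * n * (m ^ 2 - n ^ 2) := by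
  have : IsCyclotomicExtension {3} ℚ (CyclotomicField 3 ℚ) :=
    CyclotomicField.isCyclotomicExtension 3 ℚ
  have hζ := IsCyclotomicExtension.zeta_spec 3 ℚ (CyclotomicField 3 ℚ)
  obtain ⟨m, k, hmk⟩ := exists_cube_eq_of_sq_add_three_mul_sq_eq_cube hζ hpq hodd h
  obtain ⟨hp, hq⟩ := int_add_int_mul_toInteger_inj hζ (m := p + q) (n := 2 * q)
    (m' := m ^ 3 + 8 * k ^ 3 - 12 * m * k ^ 2) (n' := 6 * m * k * (m - 2 * k)) (by
    rw [Int.cast_mul, Int.cast_two, hmk]; push_cast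
    linear_combination (12 * m * k ^ 2 : 𝓞 (CyclotomicField 3 ℚ)) * toInteger_sq_add_add_one hζ +
      (8 * k ^ 3 : 𝓞 (CyclotomicField 3 ℚ)) * hζ.toInteger_cube_eq_one)
  have hp' : p = (m - k) * ((m - k) ^ 2 - 9 * k ^ 2) := by linarith
  have hq' : q = 3 * k * ((m - k) ^ 2 - k ^ 2) := by linarith
  refine ⟨m - k, k, ?_, ?_, hp', hq'⟩
  · exact (hpq.of_isCoprime_of_dvd_left (hp' ▸ dvd_mul_right _ _)).of_isCoprime_of_dvd_right
      (hq' ▸ (dvd_mul_left _ _).mul_right _)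
  · rw [hp', hq'] at hodd
    have h3 : ¬ Even (3 : ℤ) := by decide
    have h9 : ¬ Even (9 : ℤ) := by decide
    simp only [← Int.not_even_iff_odd, Int.even_add, Int.even_sub, Int.even_mul, Int.even_pow]
      at hodd ⊢
    tauto

lemma odd_and_odd_of_cube_add_cube_eq_two_mul_cube {a b c : ℤ} (hab : IsCoprime a b)
    (h : a ^ 3 + b ^ 3 = 2 * c ^ 3) : Odd a ∧ Odd b := by
  have h2 : Even (a ^ 3 + b ^ 3) := h ▸ even_two_mul _
  have hnot : ¬ (Even a ∧ Even b) := fun ⟨ha, hb⟩ ↦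
    Int.prime_two.not_isUnit (hab.isUnit_of_dvd' ha.two_dvd hb.two_dvd)
  simp only [Int.even_add, Int.even_pow' three_ne_zero] at h2
  simp only [← Int.not_even_iff_odd]
  tauto

lemma isCoprime_of_cube_add_cube_eq_two_mul_cube {a b c : ℤ} (hac : IsCoprime a c)
    (h : a ^ 3 + b ^ 3 = 2 * c ^ 3) : IsCoprime a b := by
  have ha : Odd a := by
    by_contra hae
    obtain ⟨k, rfl⟩ := Int.not_odd_iff_even.mp hae
    obtain ⟨l, rfl⟩ : Even b := (Int.even_pow' three_ne_zero).mp ⟨c ^ 3 - 4 * k ^ 3, by linarith⟩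
    have hc : Even c := (Int.even_pow' three_ne_zero).mp ⟨2 * (k ^ 3 + l ^ 3), by linarith⟩
    exact Int.prime_two.not_isUnit (hac.isUnit_of_dvd' ⟨k, by ring⟩ hc.two_dvd)
  have h2 : IsCoprime (a ^ 3) (2 * c ^ 3) :=
    (Int.isCoprime_two_right.mpr ha.pow).mul_right hac.pow
  rw [show 2 * c ^ 3 = b ^ 3 + a ^ 3 * 1 by linarith, IsCoprime.add_mul_left_right_iff] at h2
  exact (IsCoprime.pow_iff three_pos three_pos).mp h2

def IsNontrivialSolution (a b c : ℤ) : Prop :=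
  IsCoprime a b ∧ a ≠ b ∧ c ≠ 0 ∧ a ^ 3 + b ^ 3 = 2 * c ^ 3

lemma exists_isNontrivialSolution_of_mul_sq_sub_sq_eq_cube {x y z : ℤ} (hxy : IsCoprime x y)
    (hodd : Odd (x + y)) (hx : x ≠ 0) (hy : y ≠ 0) (h : x * (x ^ 2 - y ^ 2) = z ^ 3) :
    ∃ α β γ : ℤ, IsNontrivialSolution α β γ ∧ x = γ ^ 3 := by
  have hsub : IsCoprime x (x - y) := by
    rw [show x - y = -y + x * 1 by ring, IsCoprime.add_mul_left_right_iff,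
      IsCoprime.neg_right_iff]
    exact hxy
  have hadd : IsCoprime x (x + y) := by
    rw [show x + y = y + x * 1 by ring, IsCoprime.add_mul_left_right_iff]
    exact hxy
  have hsub_add : IsCoprime (x - y) (x + y) := by
    have hodd' : Odd (x - y) := by
      rw [show x - y = x + y - 2 * y by ring]
      exact hodd.sub_even (even_two_mul y)
    have hy' : IsCoprime (x - y) y := by
      rw [show x - y = x - 1 * y by ring, IsCoprime.sub_mul_right_left_iff]
      exact hxy
    rw [show x + y = 2 * y + (x - y) * 1 by ring, IsCoprime.add_mul_left_right_iff]
    exact (Int.isCoprime_two_right.mpr hodd').mul_right hy'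
  obtain ⟨⟨γ, hγ⟩, w, hw⟩ := Int.eq_pow_of_mul_eq_pow_odd (k := 3) (hsub.mul_right hadd)
    (by decide) (c := z) (by rw [← h]; ring)
  obtain ⟨⟨α, hα⟩, β, hβ⟩ := Int.eq_pow_of_mul_eq_pow_odd (k := 3) hsub_add (by decide) hw
  refine ⟨α, β, γ, ⟨?_, ?_, ?_, ?_⟩, hγ⟩
  · rw [hα, hβ] at hsub_add
    exact (IsCoprime.pow_iff three_pos three_pos).mp hsub_add
  · rintro rfl
    exact hy (by linarith)
  · rintro rfl
    exact hx (by simpa using hγ)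
  · rw [← hα, ← hβ, ← hγ]; ring

lemma natAbs_lt_of_natAbs_pow_lt {a b : ℤ} {n : ℕ} (h : (a ^ n).natAbs < (b ^ n).natAbs) :
    a.natAbs < b.natAbs := by
  rw [Int.natAbs_pow, Int.natAbs_pow] at h
  exact lt_of_pow_lt_pow_left₀ n (Nat.zero_le _) h

lemma exists_isNontrivialSolution_of_not_three_dvd {P Q c : ℤ} (hPQ : IsCoprime P Q)
    (hodd : Odd (P + Q)) (hQ : Q ≠ 0) (hc : c ≠ 0) (h : P * (P ^ 2 + 3 * Q ^ 2) = c ^ 3)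
    (h3 : ¬ 3 ∣ P) : ∃ α β γ : ℤ, IsNontrivialSolution α β γ ∧ γ.natAbs < c.natAbs := by
  have hP : P ≠ 0 := left_ne_zero_of_mul (h ▸ pow_ne_zero 3 hc)
  have hP3 : IsCoprime P 3 := (Int.prime_three.coprime_iff_not_dvd.mpr h3).symm
  have hcop : IsCoprime P (P ^ 2 + 3 * Q ^ 2) := by
    rw [show P ^ 2 + 3 * Q ^ 2 = 3 * Q ^ 2 + P * P by ring, IsCoprime.add_mul_left_right_iff]
    exact hP3.mul_right hPQ.pow_right
  obtain ⟨⟨S, hS⟩, T, hT⟩ := Int.eq_pow_of_mul_eq_pow_odd (k := 3) hcop (by decide) h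
  obtain ⟨m, n, hmn, hmn_odd, hPm, hQn⟩ := exists_eq_of_sq_add_three_mul_sq_eq_cube hPQ hodd hT
  have hm : m ≠ 0 := by rintro rfl; simp [hPm] at hP
  have hn : n ≠ 0 := by rintro rfl; simp [hQn] at hQ
  have hmP : m ∣ P := hPm ▸ dvd_mul_right m _
  obtain ⟨α, β, γ, hsol, hγ⟩ := exists_isNontrivialSolution_of_mul_sq_sub_sq_eq_cube (y := 3 * n)
    ((hP3.of_isCoprime_of_dvd_left hmP).mul_right hmn)
    (by rw [show m + 3 * n = m + n + 2 * n by ring]; exact hmn_odd.add_even (even_two_mul n))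
    hm (by simpa using hn) (z := S) (by rw [← hS, hPm]; ring)
  refine ⟨α, β, γ, hsol, natAbs_lt_of_natAbs_pow_lt (n := 3) ?_⟩
  calc (γ ^ 3).natAbs = m.natAbs := by rw [hγ]
    _ ≤ P.natAbs := Int.natAbs_le_of_dvd_ne_zero hmP hP
    _ < (c ^ 3).natAbs := by
      rw [← h, Int.natAbs_mul]
      refine lt_mul_of_one_lt_right (Int.natAbs_pos.mpr hP) ?_
      have : 0 < Q ^ 2 := by positivity
      have : (1 : ℤ) < P ^ 2 + 3 * Q ^ 2 := by linarith [sq_nonneg P]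
      omega

lemma exists_isNontrivialSolution_of_three_dvd {P Q c : ℤ} (hPQ : IsCoprime P Q)
    (hodd : Odd (P + Q)) (hQ : Q ≠ 0) (hc : c ≠ 0) (h : P * (P ^ 2 + 3 * Q ^ 2) = c ^ 3)
    (h3 : 3 ∣ P) : ∃ α β γ : ℤ, IsNontrivialSolution α β γ ∧ γ.natAbs < c.natAbs := by
  obtain ⟨r, rfl⟩ := h3
  have hQ3 : ¬ 3 ∣ Q := fun hd ↦
    Int.prime_three.not_isUnit (hPQ.isUnit_of_dvd' (dvd_mul_right 3 r) hd)
  obtain ⟨w, hcw⟩ : (3 : ℤ) ∣ c :=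
    Int.prime_three.dvd_of_dvd_pow (n := 3) ⟨r * ((3 * r) ^ 2 + 3 * Q ^ 2), by rw [← h]; ring⟩
  have hr : r * (3 * r ^ 2 + Q ^ 2) = 3 * w ^ 3 :=
    mul_left_cancel₀ (by norm_num : (9 : ℤ) ≠ 0) (by rw [hcw] at h; linear_combination h)
  obtain ⟨s, rfl⟩ : (3 : ℤ) ∣ r := by
    refine (Int.prime_three.dvd_or_dvd ⟨w ^ 3, hr⟩).resolve_right fun hd ↦ hQ3 ?_
    exact Int.prime_three.dvd_of_dvd_pow (n := 2) ((dvd_add_right (dvd_mul_right 3 _)).mp hd)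
  have hs : s * (Q ^ 2 + 3 * (3 * s) ^ 2) = w ^ 3 :=
    mul_left_cancel₀ (by norm_num : (3 : ℤ) ≠ 0) (by linear_combination hr)
  have hw : w ≠ 0 := by rintro rfl; simp [hcw] at hc
  have hs0 : s ≠ 0 := left_ne_zero_of_mul (hs ▸ pow_ne_zero 3 hw)
  have hsQ : IsCoprime s Q := hPQ.of_isCoprime_of_dvd_left ⟨3 * 3, by ring⟩
  have hcop : IsCoprime s (Q ^ 2 + 3 * (3 * s) ^ 2) := by
    rw [show Q ^ 2 + 3 * (3 * s) ^ 2 = Q ^ 2 + s * (27 * s) by ring,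
      IsCoprime.add_mul_left_right_iff]
    exact hsQ.pow_right
  obtain ⟨⟨F, hF⟩, G, hG⟩ := Int.eq_pow_of_mul_eq_pow_odd (k := 3) hcop (by decide) hs
  obtain ⟨m, n, hmn, hmn_odd, hQm, hsn⟩ := exists_eq_of_sq_add_three_mul_sq_eq_cube
    (((Int.prime_three.coprime_iff_not_dvd.mpr hQ3).symm).mul_right hsQ.symm)
    (by rw [show Q + 3 * s = 3 * (3 * s) + Q - 2 * (3 * s) by ring]
        exact hodd.sub_even (even_two_mul _)) hG
  replace hsn : s = n * (m ^ 2 - n ^ 2) :=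
    mul_left_cancel₀ (by norm_num : (3 : ℤ) ≠ 0) (by linear_combination hsn)
  have hm : m ≠ 0 := by rintro rfl; simp [hQm] at hQ
  have hn : n ≠ 0 := by rintro rfl; simp [hsn] at hs0
  have hns : n ∣ s := hsn ▸ dvd_mul_right n _
  obtain ⟨α, β, γ, hsol, hγ⟩ := exists_isNontrivialSolution_of_mul_sq_sub_sq_eq_cube hmn.symm
    (by rwa [add_comm]) hn hm (z := -F) (by rw [neg_pow, ← hF, hsn]; ring)
  refine ⟨α, β, γ, hsol, natAbs_lt_of_natAbs_pow_lt (n := 3) ?_⟩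
  calc (γ ^ 3).natAbs = n.natAbs := by rw [hγ]
    _ ≤ s.natAbs := Int.natAbs_le_of_dvd_ne_zero hns hs0
    _ ≤ (w ^ 3).natAbs := Int.natAbs_le_of_dvd_ne_zero (hs ▸ dvd_mul_right s _) (pow_ne_zero 3 hw)
    _ < (c ^ 3).natAbs := by
      rw [hcw, mul_pow, Int.natAbs_mul]
      exact lt_mul_of_one_lt_left (Int.natAbs_pos.mpr (pow_ne_zero 3 hw)) (by norm_num)

lemma IsNontrivialSolution.exists_natAbs_lt {a b c : ℤ} (h : IsNontrivialSolution a b c) :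
    ∃ α β γ : ℤ, IsNontrivialSolution α β γ ∧ γ.natAbs < c.natAbs := by
  obtain ⟨hab, hne, hc, heq⟩ := h
  obtain ⟨ha, hb⟩ := odd_and_odd_of_cube_add_cube_eq_two_mul_cube hab heq
  obtain ⟨P, hP⟩ := ha.add_odd hb
  obtain ⟨Q, hQ⟩ := ha.sub_odd hb
  obtain ⟨rfl, rfl⟩ : a = P + Q ∧ b = P - Q := by omega
  have hPQ : IsCoprime P Q := by
    obtain ⟨u, v, huv⟩ := hab
    exact ⟨u + v, u - v, by linear_combination huv⟩
  have hQ0 : Q ≠ 0 := by rintro rfl; simp at hne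
  have hcube : P * (P ^ 2 + 3 * Q ^ 2) = c ^ 3 :=
    mul_left_cancel₀ (by norm_num : (2 : ℤ) ≠ 0) (by linear_combination heq)
  by_cases h3 : 3 ∣ P
  · exact exists_isNontrivialSolution_of_three_dvd hPQ ha hQ0 hc hcube h3
  · exact exists_isNontrivialSolution_of_not_three_dvd hPQ ha hQ0 hc hcube h3

theorem not_isNontrivialSolution (a b c : ℤ) : ¬ IsNontrivialSolution a b c := by
  induction hn : c.natAbs using Nat.strong_induction_on generalizing a b c with
  | _ n ih =>
    intro h
    obtain ⟨α, β, γ, hsol, hlt⟩ := h.exists_natAbs_lt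
    exact ih _ (hn ▸ hlt) α β γ rfl hsol

lemma Rat.eq_of_cube_add_cube_eq_two {u v : ℚ} (h : u ^ 3 + v ^ 3 = 2) : u = v := by
  have hden : u.den = v.den := by
    have : (u ^ 3).den = (v ^ 3).den := by
      rw [show u ^ 3 = -v ^ 3 + (2 : ℤ) by push_cast; linarith, Rat.add_intCast_den, Rat.neg_den]
    rw [Rat.den_pow, Rat.den_pow] at this
    exact Nat.pow_left_injective three_ne_zero this
  have heq : u.num ^ 3 + v.num ^ 3 = 2 * (u.den : ℤ) ^ 3 := by
    rw [← Rat.num_div_den u, ← Rat.num_div_den v, ← hden, div_pow, div_pow, ← add_div,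
      div_eq_iff (by positivity)] at h
    exact_mod_cast h
  have hcop : IsCoprime u.num (u.den : ℤ) := Int.isCoprime_iff_gcd_eq_one.mpr u.reduced
  have hnum : u.num = v.num := by
    by_contra hne
    exact not_isNontrivialSolution _ _ _
      ⟨isCoprime_of_cube_add_cube_eq_two_mul_cube hcop heq, hne, by simp, heq⟩
  rw [← Rat.num_div_den u, ← Rat.num_div_den v, hnum, hden]

/-- The Mordell curve y² = x³ − 27 has only finitely many rational points, and its
only affine rational point is (3, 0). -/
theorem mordell_minus27_rational_points :
    {P : ℚ × ℚ | P.2 ^ 2 = P.1 ^ 3 - 27}.Finite ∧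
    ∀ x y : ℚ, y ^ 2 = x ^ 3 - 27 → x = 3 ∧ y = 0 := by
  have key : ∀ x y : ℚ, y ^ 2 = x ^ 3 - 27 → x = 3 ∧ y = 0 := by
    intro x y h
    have hx : x ≠ 0 := by rintro rfl; nlinarith [sq_nonneg y]
    have huv : ((9 + y) / (3 * x)) ^ 3 + ((9 - y) / (3 * x)) ^ 3 = 2 := by
      field_simp
      linear_combination 54 * h
    have hy : y = 0 := by
      have := Rat.eq_of_cube_add_cube_eq_two huv
      rw [div_left_inj' (by positivity)] at this
      linarith
    subst hy
    exact ⟨(Odd.pow_inj (by decide)).mp (by linarith : x ^ 3 = 3 ^ 3), rfl⟩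
  refine ⟨(Set.finite_singleton ((3 : ℚ), (0 : ℚ))).subset ?_, key⟩
  rintro ⟨x, y⟩ h
  obtain ⟨rfl, rfl⟩ := key x y h
  rfl
end

section
/- Any subgroup of GL₂(F_p) that contains the standard Borel subgroup of upper-triangular invertible matrices as a proper subgroup must be all of GL₂(F_p), i.e. the Borel subgroup is maximal in GL₂(F_p). -/
/-!
Bruhat decomposition: an invertible matrix `M` with `M 1 0 ≠ 0` factors as `L * w * R` with
`L`, `R` upper triangular and `w = !![0, 1; 1, 0]`, so `GL₂(K) = B ∪ B w B` for every field `K`.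
A subgroup strictly containing `B` contains some element of `B w B`, hence `w`, hence everything.
-/

open Matrix

namespace Matrix.GeneralLinearGroup

def borel (R : Type*) [CommRing R] : Subgroup (GL (Fin 2) R) where
  carrier := {M | (M : Matrix (Fin 2) (Fin 2) R) 1 0 = 0}
  mul_mem' hM hN := by simp_all [Matrix.mul_apply, Fin.sum_univ_two]
  one_mem' := by simp
  inv_mem' hM := by simp_all [Matrix.inv_def, adjugate_fin_two]

section CommRing

variable {R : Type*} [CommRing R]

lemma mem_borel {M : GL (Fin 2) R} : M ∈ borel R ↔ (M : Matrix (Fin 2) (Fin 2) R) 1 0 = 0 :=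
  Iff.rfl

lemma upperRightHom_mem_borel (x : R) : upperRightHom x ∈ borel R := by
  simp [mem_borel]

def weyl (R : Type*) [CommRing R] : GL (Fin 2) R :=
  ⟨!![0, 1; 1, 0], !![0, 1; 1, 0], by simp [one_fin_two], by simp [one_fin_two]⟩

lemma weyl_notMem_borel [Nontrivial R] : weyl R ∉ borel R := by
  simp [mem_borel, weyl]

end CommRing

variable {K : Type*} [Field K]

lemma exists_eq_mul_weyl_mul {M : GL (Fin 2) K} (hM : (M : Matrix (Fin 2) (Fin 2) K) 1 0 ≠ 0) :
    ∃ L ∈ borel K, ∃ R ∈ borel K, M = L * weyl K * R := by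
  set x := (M : Matrix (Fin 2) (Fin 2) K) 0 0 / (M : Matrix (Fin 2) (Fin 2) K) 1 0
  -- `x` is chosen so that `(upperRightHom x)⁻¹ * M` has top-left entry zero
  refine ⟨upperRightHom x, upperRightHom_mem_borel x,
    (weyl K)⁻¹ * (upperRightHom x)⁻¹ * M, ?_, by group⟩
  simp [mem_borel, weyl, x, Matrix.mul_apply, Fin.sum_univ_two, hM]

lemma weyl_mem_of_borel_lt {G : Subgroup (GL (Fin 2) K)} (hG : borel K < G) : weyl K ∈ G := by
  obtain ⟨M, hMG, hMB⟩ := SetLike.exists_of_lt hG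
  obtain ⟨L, hL, R, hR, rfl⟩ := exists_eq_mul_weyl_mul (mem_borel.not.mp hMB)
  have := G.mul_mem (G.mul_mem (G.inv_mem (hG.le hL)) hMG) (G.inv_mem (hG.le hR))
  simpa [mul_assoc] using this

lemma eq_top_of_borel_le_of_weyl_mem {G : Subgroup (GL (Fin 2) K)} (hBG : borel K ≤ G)
    (hw : weyl K ∈ G) : G = ⊤ := by
  refine eq_top_iff.mpr fun M _ ↦ ?_
  by_cases hM : (M : Matrix (Fin 2) (Fin 2) K) 1 0 = 0
  · exact hBG hM
  · obtain ⟨L, hL, R, hR, rfl⟩ := exists_eq_mul_weyl_mul hM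
    exact G.mul_mem (G.mul_mem (hBG hL) hw) (hBG hR)

theorem isCoatom_borel : IsCoatom (borel K) :=
  ⟨fun h ↦ weyl_notMem_borel (h ▸ Subgroup.mem_top _),
    fun _ hG ↦ eq_top_of_borel_le_of_weyl_mem hG.le (weyl_mem_of_borel_lt hG)⟩

end Matrix.GeneralLinearGroup

/-- The standard Borel subgroup of upper-triangular invertible matrices is a
maximal subgroup of GL₂(F_p). -/
theorem borel_maximal (p : ℕ) [Fact p.Prime]
    (B G : Subgroup (GL (Fin 2) (ZMod p)))
    (hB : (B : Set (GL (Fin 2) (ZMod p))) =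
      {M : GL (Fin 2) (ZMod p) | (M : Matrix (Fin 2) (Fin 2) (ZMod p)) 1 0 = 0})
    (hBG : B ≤ G) (hne : G ≠ B) : G = ⊤ := by
  obtain rfl : B = GeneralLinearGroup.borel (ZMod p) := SetLike.coe_injective hB
  exact GeneralLinearGroup.isCoatom_borel.2 G (hBG.lt_of_ne hne.symm)
end
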